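/- arXiv:2001.03766 — 9 statements merged into one kernel-verified Lean document; each statement's English description precedes it below -/
import Mathlib

section
/- With the notation above, if n̄ ∈ {1,...,n} is the smallest index with G_{n̄} ≥ 0, then f(x^{(n̄−1)}) = min_{0 ≤ k ≤ n} f(x^{(k)}); that is, x^{(n̄−1)} minimizes f over the finite set {x^{(0)}, x^{(1)}, ..., x^{(n)}}. -/
open Finset

noncomputable def Usum (u : ℕ → ℝ) (k : ℕ) : ℝ := ∑ i ∈ Finset.Icc 1 k, u i

noncomputable def fobj (n : ℕ) (c x : ℕ → ℝ) : ℝ :=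
  (1/2) * (∑ i ∈ Finset.Icc 1 n, x i)^2 - ∑ i ∈ Finset.Icc 1 n, c i * x i

noncomputable def xk (u : ℕ → ℝ) (k : ℕ) : ℕ → ℝ := fun i => if i ≤ k then u i else 0

noncomputable def Gseq (u c : ℕ → ℝ) (k : ℕ) : ℝ := Usum u (k-1) + u k / 2 - c k

lemma sum_xk (g : ℕ → ℝ) (k n : ℕ) (hk : k ≤ n) :
    ∑ i ∈ Finset.Icc 1 n, (if i ≤ k then g i else 0) = ∑ i ∈ Finset.Icc 1 k, g i := by
  rw [← Finset.sum_filter]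
  congr 1
  ext i
  simp only [Finset.mem_filter, Finset.mem_Icc]
  omega

lemma fobj_xk (n : ℕ) (u c : ℕ → ℝ) (k : ℕ) (hk : k ≤ n) :
    fobj n c (xk u k) = (1/2) * (Usum u k)^2 - ∑ i ∈ Finset.Icc 1 k, c i * u i := by
  unfold fobj xk Usum
  simp only [mul_ite, mul_zero]
  rw [sum_xk u k n hk, sum_xk (fun i => c i * u i) k n hk]

lemma Icc_sum_succ (g : ℕ → ℝ) (k : ℕ) (hk : 1 ≤ k) :
    ∑ i ∈ Finset.Icc 1 k, g i = (∑ i ∈ Finset.Icc 1 (k-1), g i) + g k := by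
  obtain ⟨m, rfl⟩ : ∃ m, k = m + 1 := ⟨k-1, by omega⟩
  rw [Finset.sum_Icc_succ_top (by omega)]
  simp

lemma Usum_succ (u : ℕ → ℝ) (k : ℕ) (hk : 1 ≤ k) :
    Usum u k = Usum u (k-1) + u k := Icc_sum_succ u k hk

lemma fval_step (n : ℕ) (u c : ℕ → ℝ) (k : ℕ) (h1 : 1 ≤ k) (hk : k ≤ n) :
    fobj n c (xk u k) = fobj n c (xk u (k-1)) + u k * Gseq u c k := by
  rw [fobj_xk n u c k hk, fobj_xk n u c (k-1) (by omega)]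
  rw [Icc_sum_succ (fun i => c i * u i) k h1]
  unfold Gseq
  rw [Usum_succ u k h1]
  ring

lemma Gnonneg (n : ℕ) (u c : ℕ → ℝ)
    (hu : ∀ i, 1 ≤ i → i ≤ n → 0 < u i)
    (hc : ∀ i j, 1 ≤ i → i ≤ j → j ≤ n → c j ≤ c i)
    (nb : ℕ) (hnb1 : 1 ≤ nb) (hnbn : nb ≤ n)
    (hGnb : 0 ≤ Gseq u c nb)
    (k : ℕ) (h1 : nb ≤ k) (h2 : k ≤ n) : 0 ≤ Gseq u c k := by
  rcases eq_or_lt_of_le h1 with rfl | hlt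
  · exact hGnb
  · have hck : c k ≤ c nb := hc nb k hnb1 (le_of_lt hlt) h2
    have hU : Usum u (nb-1) + u nb ≤ Usum u (k-1) := by
      rw [← Usum_succ u nb hnb1]
      unfold Usum
      apply Finset.sum_le_sum_of_subset_of_nonneg
      · exact Finset.Icc_subset_Icc_right (by omega)
      · intro i hi _
        simp only [Finset.mem_Icc] at hi
        exact (hu i hi.1 (by omega)).le
    have hunb := hu nb hnb1 hnbn
    have huk := hu k (by omega) h2
    unfold Gseq at hGnb ⊢
    linarith

theorem stmt2 (n : ℕ) (hn : 0 < n) (u c : ℕ → ℝ)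
    (hu : ∀ i, 1 ≤ i → i ≤ n → 0 < u i)
    (hc : ∀ i j, 1 ≤ i → i ≤ j → j ≤ n → c j ≤ c i)
    (hc0 : 0 ≤ c n)
    (nb : ℕ) (hnb1 : 1 ≤ nb) (hnbn : nb ≤ n)
    (hGnb : 0 ≤ Gseq u c nb)
    (hleast : ∀ k, 1 ≤ k → k < nb → Gseq u c k < 0) :
    ∀ k, k ≤ n → fobj n c (xk u (nb - 1)) ≤ fobj n c (xk u k) := by
  set m := nb - 1 with hm
  have step_lt : ∀ k, 1 ≤ k → k ≤ m → fobj n c (xk u k) ≤ fobj n c (xk u (k-1)) := by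
    intro k h1 h2
    rw [fval_step n u c k h1 (by omega)]
    have hG := hleast k h1 (by omega)
    have hup := hu k h1 (by omega)
    have := mul_neg_of_pos_of_neg hup hG
    linarith
  have claim1 : ∀ d, fobj n c (xk u m) ≤ fobj n c (xk u (m - d)) := by
    intro d
    induction d with
    | zero => simp
    | succ d ih =>
      by_cases h : 1 ≤ m - d
      · have he : m - (d+1) = (m - d) - 1 := by omega
        rw [he]
        exact le_trans ih (step_lt (m-d) h (by omega))
      · have he : m - (d+1) = m - d := by omega
        rw [he]; exact ih
  have claim2 : ∀ d, m + d ≤ n → fobj n c (xk u m) ≤ fobj n c (xk u (m + d)) := by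
    intro d
    induction d with
    | zero => intro _; simp
    | succ d ih =>
      intro h
      have h' : m + d ≤ n := by omega
      have hk1 : 1 ≤ m + (d+1) := by omega
      have hGk : 0 ≤ Gseq u c (m + (d+1)) :=
        Gnonneg n u c hu hc nb hnb1 hnbn hGnb (m + (d+1)) (by omega) (by omega)
      have hupos := hu (m+(d+1)) hk1 (by omega)
      have hs := fval_step n u c (m+(d+1)) hk1 (by omega)
      have he : m + (d+1) - 1 = m + d := by omega
      rw [hs, he]
      have := mul_nonneg hupos.le hGk
      have := ih h'
      linarith
  intro k hk
  by_cases h : k ≤ m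
  · have he : k = m - (m - k) := by omega
    rw [he]; exact claim1 (m - k)
  · have he : k = m + (k - m) := by omega
    rw [he]; exact claim2 (k - m) (by omega)
end

section
/- With c nonincreasing, nonnegative and u positive, suppose n̄ > 1 is the least index with G_{n̄} ≥ 0. Define δ₁ = min{c_{n̄−1} − U_{n̄−2}, u_{n̄−1}}, δ₂ = max{c_{n̄} − U_{n̄−1}, 0}, x̄ = x^{(n̄−2)} + δ₁ e_{n̄−1} and x̃ = x^{(n̄−1)} + δ₂ e_{n̄}. Then min{f(x̄), f(x̃)} = min{ f(x) : x^{(n̄−2)} ≤ x ≤ x^{(n̄)} }. -/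
/-!
On the box `x^(n̄-2) ≤ x ≤ x^(n̄)` only the coordinates `s = x_(n̄-1)` and `t = x_(n̄)` are free, and
`f` becomes, up to a constant, `φ(s, t) = ½ (A + s + t)² - p s - q t` with `A = U_(n̄-2)`,
`p = c_(n̄-1) ≥ q = c_(n̄)`. Shifting mass from `t` to `s` keeps `s + t` and does not increase `φ`, so
some minimiser has `t = 0` or `s = u_(n̄-1)`; on either edge `φ` is a one-variable convex quadratic,
minimised at its clamped vertex, which gives `x̄` resp. `x̃`. The minimality of `n̄` (`G_(n̄-1) < 0`)
and `G_(n̄) ≥ 0` are exactly what makes these two points lie in the box.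
-/

open Finset

noncomputable def reducedObj (A p q s t : ℝ) : ℝ := (1/2) * (A + s + t)^2 - p * s - q * t

section reducedObj

variable {A p q : ℝ}

lemma reducedObj_shift_le (hqp : q ≤ p) {d : ℝ} (hd : 0 ≤ d) (s t : ℝ) :
    reducedObj A p q (s + d) (t - d) ≤ reducedObj A p q s t := by
  unfold reducedObj
  nlinarith [mul_nonneg hd (sub_nonneg.2 hqp)]

lemma reducedObj_min_le {a y : ℝ} (hy : y ≤ a) :
    reducedObj A p q (min (p - A) a) 0 ≤ reducedObj A p q y 0 := by
  unfold reducedObj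
  rcases le_total (p - A) a with h | h
  · rw [min_eq_left h]
    nlinarith [sq_nonneg (y - (p - A))]
  · rw [min_eq_right h]
    nlinarith [mul_nonneg (sub_nonneg.2 hy) (sub_nonneg.2 h), sq_nonneg (a - y)]

lemma reducedObj_max_le {a t : ℝ} (ht : 0 ≤ t) :
    reducedObj A p q a (max (q - (A + a)) 0) ≤ reducedObj A p q a t := by
  unfold reducedObj
  rcases le_total (q - (A + a)) 0 with h | h
  · rw [max_eq_right h]
    nlinarith [mul_nonneg ht (neg_nonneg.2 h), sq_nonneg t]
  · rw [max_eq_left h]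
    nlinarith [sq_nonneg (t - (q - (A + a)))]

lemma reducedObj_candidates_le (hqp : q ≤ p) {a s t : ℝ} (hs : s ≤ a) (ht : 0 ≤ t) :
    min (reducedObj A p q (min (p - A) a) 0) (reducedObj A p q a (max (q - (A + a)) 0))
      ≤ reducedObj A p q s t := by
  rcases le_or_gt (s + t) a with h | h
  · calc _ ≤ reducedObj A p q (min (p - A) a) 0 := min_le_left _ _
      _ ≤ reducedObj A p q (s + t) (t - t) := by rw [sub_self]; exact reducedObj_min_le h
      _ ≤ reducedObj A p q s t := reducedObj_shift_le hqp ht s t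
  · calc _ ≤ reducedObj A p q a (max (q - (A + a)) 0) := min_le_right _ _
      _ ≤ reducedObj A p q a (s + t - a) := reducedObj_max_le (by linarith)
      _ = reducedObj A p q (s + (a - s)) (t - (a - s)) := by congr 1 <;> ring
      _ ≤ reducedObj A p q s t := reducedObj_shift_le hqp (by linarith) s t

end reducedObj

lemma xk_of_le {u : ℕ → ℝ} {k i : ℕ} (h : i ≤ k) : xk u k i = u i := if_pos h

lemma xk_of_lt {u : ℕ → ℝ} {k i : ℕ} (h : k < i) : xk u k i = 0 := if_neg (Nat.not_le.2 h)

lemma xk_le_and_le_xk_add_two_iff {n m : ℕ} (hmn : m + 2 ≤ n) {u x : ℕ → ℝ} :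
    (∀ i, 1 ≤ i → i ≤ n → xk u m i ≤ x i ∧ x i ≤ xk u (m + 2) i) ↔
      (∀ i, 1 ≤ i → i ≤ m → x i = u i) ∧ (∀ i, m + 2 < i → i ≤ n → x i = 0) ∧
        (0 ≤ x (m + 1) ∧ x (m + 1) ≤ u (m + 1)) ∧ (0 ≤ x (m + 2) ∧ x (m + 2) ≤ u (m + 2)) := by
  constructor
  · intro h
    refine ⟨fun i h1 h2 => ?_, fun i h1 h2 => ?_, ?_, ?_⟩
    · have := h i h1 (by omega)
      rw [xk_of_le h2, xk_of_le (by omega)] at this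
      exact le_antisymm this.2 this.1
    · have := h i (by omega) h2
      rw [xk_of_lt (by omega), xk_of_lt h1] at this
      exact le_antisymm this.2 this.1
    · simpa [xk_of_lt, xk_of_le] using h (m + 1) (by omega) (by omega)
    · simpa [xk_of_lt, xk_of_le] using h (m + 2) (by omega) hmn
  · rintro ⟨hlow, hhigh, hm1, hm2⟩ i h1 h2
    rcases lt_trichotomy i (m + 1) with hi | rfl | hi
    · rw [xk_of_le (by omega), xk_of_le (by omega), hlow i h1 (by omega)]
      exact ⟨le_rfl, le_rfl⟩
    · rwa [xk_of_lt (by omega), xk_of_le (by omega)]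
    rcases (Nat.succ_le_of_lt hi).eq_or_lt with rfl | hi
    · rwa [xk_of_lt (by omega), xk_of_le le_rfl]
    · rw [xk_of_lt (by omega), xk_of_lt hi, hhigh i hi h2]
      exact ⟨le_rfl, le_rfl⟩

lemma fobj_eq_reducedObj {n m : ℕ} (hmn : m + 2 ≤ n) {c u x : ℕ → ℝ}
    (hlow : ∀ i, 1 ≤ i → i ≤ m → x i = u i) (hhigh : ∀ i, m + 2 < i → i ≤ n → x i = 0) :
    fobj n c x = reducedObj (Usum u m) (c (m + 1)) (c (m + 2)) (x (m + 1)) (x (m + 2))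
      - ∑ i ∈ Icc 1 m, c i * u i := by
  have split : ∀ y : ℕ → ℝ, (∀ i, m + 2 < i → i ≤ n → y i = 0) →
      ∑ i ∈ Icc 1 n, y i = ∑ i ∈ Icc 1 m, y i + y (m + 1) + y (m + 2) := by
    intro y hy
    rw [← sum_subset (Icc_subset_Icc_right hmn) fun i hi hni => by
        simp only [mem_Icc] at hi hni; exact hy i (by omega) hi.2,
      sum_Icc_succ_top (by omega), sum_Icc_succ_top (by omega)]
  have hlow' : ∀ i ∈ Icc 1 m, x i = u i := fun i hi => hlow i (mem_Icc.1 hi).1 (mem_Icc.1 hi).2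
  have hsum : ∑ i ∈ Icc 1 m, x i = ∑ i ∈ Icc 1 m, u i := sum_congr rfl hlow'
  have hcsum : ∑ i ∈ Icc 1 m, c i * x i = ∑ i ∈ Icc 1 m, c i * u i :=
    sum_congr rfl fun i hi => by rw [hlow' i hi]
  unfold fobj reducedObj Usum
  rw [split x hhigh, split (fun i => c i * x i) fun i h1 h2 => by simp [hhigh i h1 h2], hsum,
    hcsum]
  ring

theorem isLeast_fobj_box {n m : ℕ} (hmn : m + 2 ≤ n) {u c : ℕ → ℝ}
    (hu₁ : 0 ≤ u (m + 1)) (hu₂ : 0 ≤ u (m + 2)) (hc : c (m + 2) ≤ c (m + 1))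
    (hUc : Usum u m ≤ c (m + 1)) (hcU : c (m + 2) - Usum u (m + 1) ≤ u (m + 2)) :
    let δ1 : ℝ := min (c (m + 1) - Usum u m) (u (m + 1))
    let δ2 : ℝ := max (c (m + 2) - Usum u (m + 1)) 0
    IsLeast ((fobj n c) ''
      {x | ∀ i, 1 ≤ i → i ≤ n → xk u m i ≤ x i ∧ x i ≤ xk u (m + 2) i})
      (min (fobj n c fun i => xk u m i + if i = m + 1 then δ1 else 0)
        (fobj n c fun i => xk u (m + 1) i + if i = m + 2 then δ2 else 0)) := by
  intro δ1 δ2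
  set xbar : ℕ → ℝ := fun i => xk u m i + if i = m + 1 then δ1 else 0
  set xtil : ℕ → ℝ := fun i => xk u (m + 1) i + if i = m + 2 then δ2 else 0
  have hUsum : Usum u (m + 1) = Usum u m + u (m + 1) := sum_Icc_succ_top (by omega) u
  have xbar_low : ∀ i, 1 ≤ i → i ≤ m → xbar i = u i := fun i _ hi => by
    simp [xbar, xk_of_le hi, show i ≠ m + 1 by omega]
  have xbar_high : ∀ i, m + 2 < i → i ≤ n → xbar i = 0 := fun i hi _ => by
    simp [xbar, xk_of_lt (show m < i by omega), show i ≠ m + 1 by omega]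
  have xtil_low : ∀ i, 1 ≤ i → i ≤ m → xtil i = u i := fun i _ hi => by
    simp [xtil, xk_of_le (show i ≤ m + 1 by omega), show i ≠ m + 2 by omega]
  have xtil_high : ∀ i, m + 2 < i → i ≤ n → xtil i = 0 := fun i hi _ => by
    simp [xtil, xk_of_lt (show m + 1 < i by omega), show i ≠ m + 2 by omega]
  have xbar_m1 : xbar (m + 1) = δ1 := by simp [xbar, xk_of_lt]
  have xbar_m2 : xbar (m + 2) = 0 := by simp [xbar, xk_of_lt]
  have xtil_m1 : xtil (m + 1) = u (m + 1) := by simp [xtil, xk_of_le]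
  have xtil_m2 : xtil (m + 2) = δ2 := by simp [xtil, xk_of_lt]
  have hδ1 : 0 ≤ δ1 ∧ δ1 ≤ u (m + 1) := ⟨le_min (by linarith) hu₁, min_le_right _ _⟩
  have hδ2 : 0 ≤ δ2 ∧ δ2 ≤ u (m + 2) := ⟨le_max_right _ _, max_le hcU hu₂⟩
  refine ⟨?_, ?_⟩
  · rcases min_choice (fobj n c xbar) (fobj n c xtil) with h | h <;> rw [h]
    · refine ⟨xbar, (xk_le_and_le_xk_add_two_iff hmn).2 ⟨xbar_low, xbar_high, ?_, ?_⟩, rfl⟩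
      · rwa [xbar_m1]
      · rw [xbar_m2]; exact ⟨le_rfl, hu₂⟩
    · refine ⟨xtil, (xk_le_and_le_xk_add_two_iff hmn).2 ⟨xtil_low, xtil_high, ?_, ?_⟩, rfl⟩
      · rw [xtil_m1]; exact ⟨hu₁, le_rfl⟩
      · rwa [xtil_m2]
  · rintro _ ⟨x, hx, rfl⟩
    obtain ⟨hlow, hhigh, ⟨-, hs⟩, ⟨ht, -⟩⟩ := (xk_le_and_le_xk_add_two_iff hmn).1 hx
    rw [fobj_eq_reducedObj hmn xbar_low xbar_high, fobj_eq_reducedObj hmn xtil_low xtil_high,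
      fobj_eq_reducedObj hmn hlow hhigh, xbar_m1, xbar_m2, xtil_m1, xtil_m2, min_sub_sub_right,
      show δ2 = max (c (m + 2) - (Usum u m + u (m + 1))) 0 by rw [← hUsum]]
    gcongr
    exact reducedObj_candidates_le hc hs ht

theorem stmt6_general (n : ℕ) (u c : ℕ → ℝ)
    (hu : ∀ i, 1 ≤ i → i ≤ n → 0 < u i)
    (hc : ∀ i j, 1 ≤ i → i ≤ j → j ≤ n → c j ≤ c i)
    (nb : ℕ) (hnb1 : 1 < nb) (hnbn : nb ≤ n)
    (hGnb : 0 ≤ Gseq u c nb)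
    (hleast : ∀ k, 1 ≤ k → k < nb → Gseq u c k < 0) :
    let δ1 : ℝ := min (c (nb-1) - Usum u (nb-2)) (u (nb-1))
    let δ2 : ℝ := max (c nb - Usum u (nb-1)) 0
    let xbar : ℕ → ℝ := fun i => xk u (nb-2) i + if i = nb-1 then δ1 else 0
    let xtil : ℕ → ℝ := fun i => xk u (nb-1) i + if i = nb then δ2 else 0
    IsLeast ((fobj n c) ''
      {x | ∀ i, 1 ≤ i → i ≤ n → xk u (nb-2) i ≤ x i ∧ x i ≤ xk u nb i})
      (min (fobj n c xbar) (fobj n c xtil)) := by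
  obtain ⟨m, rfl⟩ : ∃ m, nb = m + 2 := ⟨nb - 2, by omega⟩
  have hu₁ := hu (m + 1) (by omega) (by omega)
  have hu₂ := hu (m + 2) (by omega) hnbn
  have hG₁ : Usum u m + u (m + 1) / 2 - c (m + 1) < 0 := by
    simpa [Gseq] using hleast (m + 1) (by omega) (by omega)
  have hG₂ : 0 ≤ Usum u (m + 1) + u (m + 2) / 2 - c (m + 2) := by simpa [Gseq] using hGnb
  simpa using isLeast_fobj_box hnbn hu₁.le hu₂.le (hc (m + 1) (m + 2) (by omega) (by omega) hnbn)
    (by linarith) (by linarith)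

theorem stmt6 (n : ℕ) (hn : 0 < n) (u c : ℕ → ℝ)
    (hu : ∀ i, 1 ≤ i → i ≤ n → 0 < u i)
    (hc : ∀ i j, 1 ≤ i → i ≤ j → j ≤ n → c j ≤ c i)
    (hc0 : 0 ≤ c n)
    (nb : ℕ) (hnb1 : 1 < nb) (hnbn : nb ≤ n)
    (hGnb : 0 ≤ Gseq u c nb)
    (hleast : ∀ k, 1 ≤ k → k < nb → Gseq u c k < 0) :
    let δ1 : ℝ := min (c (nb-1) - Usum u (nb-2)) (u (nb-1))
    let δ2 : ℝ := max (c nb - Usum u (nb-1)) 0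
    let xbar : ℕ → ℝ := fun i => xk u (nb-2) i + if i = nb-1 then δ1 else 0
    let xtil : ℕ → ℝ := fun i => xk u (nb-1) i + if i = nb then δ2 else 0
    IsLeast ((fobj n c) ''
      {x | ∀ i, 1 ≤ i → i ≤ n → xk u (nb-2) i ≤ x i ∧ x i ≤ xk u nb i})
      (min (fobj n c xbar) (fobj n c xtil)) :=
  stmt6_general n u c hu hc nb hnb1 hnbn hGnb hleast
end

section
/- With the notation as above, if δ₂ = 0 (i.e., c_{n̄} ≤ U_{n̄−1}) then f(x̄) ≤ f(x̃), i.e., min{f(x̄), f(x̃)} = f(x̄). -/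
open Finset

lemma sum_ite_le (g : ℕ → ℝ) (k n : ℕ) (h : k ≤ n) :
    ∑ i ∈ Finset.Icc 1 n, (if i ≤ k then g i else 0) = ∑ i ∈ Finset.Icc 1 k, g i := by
  rw [← Finset.sum_filter]
  congr 1
  ext i
  simp only [Finset.mem_filter, Finset.mem_Icc]
  omega

theorem stmt8 (n : ℕ) (hn : 0 < n) (u c : ℕ → ℝ)
    (hu : ∀ i, 1 ≤ i → i ≤ n → 0 < u i)
    (hc : ∀ i j, 1 ≤ i → i ≤ j → j ≤ n → c j ≤ c i)
    (hc0 : 0 ≤ c n)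
    (nb : ℕ) (hnb1 : 1 < nb) (hnbn : nb ≤ n)
    (hGnb : 0 ≤ Gseq u c nb)
    (hleast : ∀ k, 1 ≤ k → k < nb → Gseq u c k < 0)
    (hδ2 : c nb ≤ Usum u (nb-1)) :
    let δ1 : ℝ := min (c (nb-1) - Usum u (nb-2)) (u (nb-1))
    let xbar : ℕ → ℝ := fun i => xk u (nb-2) i + if i = nb-1 then δ1 else 0
    let xtil : ℕ → ℝ := xk u (nb-1)
    fobj n c xbar ≤ fobj n c xtil ∧
      min (fobj n c xbar) (fobj n c xtil) = fobj n c xbar := by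
  intro δ1 xbar xtil
  have h2 : nb - 2 ≤ n := by omega
  have h3 : nb - 1 ≤ n := by omega
  have hmem : nb - 1 ∈ Finset.Icc 1 n := by simp [Finset.mem_Icc]; omega
  have hsucc : nb - 1 = (nb - 2) + 1 := by omega
  -- sums for xtil
  have hs1 : ∑ i ∈ Finset.Icc 1 n, xtil i = Usum u (nb-1) := by
    simp only [xtil, xk]; rw [sum_ite_le u (nb-1) n h3]; rfl
  have hs2 : ∑ i ∈ Finset.Icc 1 n, c i * xtil i
      = ∑ i ∈ Finset.Icc 1 (nb-1), c i * u i := by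
    simp only [xtil, xk, mul_ite, mul_zero]
    exact sum_ite_le (fun i => c i * u i) (nb-1) n h3
  -- sums for xbar
  have hs3 : ∑ i ∈ Finset.Icc 1 n, xbar i = Usum u (nb-2) + δ1 := by
    simp only [xbar, xk]
    rw [Finset.sum_add_distrib, sum_ite_le u (nb-2) n h2,
      Finset.sum_ite_eq' (Finset.Icc 1 n) (nb-1) (fun _ => δ1), if_pos hmem]
    rfl
  have hs4 : ∑ i ∈ Finset.Icc 1 n, c i * xbar i
      = (∑ i ∈ Finset.Icc 1 (nb-2), c i * u i) + c (nb-1) * δ1 := by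
    simp only [xbar, xk, mul_add, mul_ite, mul_zero]
    rw [Finset.sum_add_distrib, sum_ite_le (fun i => c i * u i) (nb-2) n h2,
      Finset.sum_ite_eq' (Finset.Icc 1 n) (nb-1) (fun i => c i * δ1), if_pos hmem]
  -- split top sums
  have hU : Usum u (nb-1) = Usum u (nb-2) + u (nb-1) := by
    rw [Usum, Usum, hsucc, Finset.sum_Icc_succ_top (by omega)]
  have hC : ∑ i ∈ Finset.Icc 1 (nb-1), c i * u i
      = (∑ i ∈ Finset.Icc 1 (nb-2), c i * u i) + c (nb-1) * u (nb-1) := by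
    rw [hsucc, Finset.sum_Icc_succ_top (by omega)]
  have key : fobj n c xbar ≤ fobj n c xtil := by
    rw [fobj, fobj, hs1, hs2, hs3, hs4, hU, hC]
    set a := Usum u (nb-2)
    set v := u (nb-1)
    set cc := c (nb-1)
    rcases min_cases (cc - a) v with ⟨he, hle⟩ | ⟨he, hle⟩
    · have hd : δ1 = cc - a := he
      rw [hd]
      nlinarith [sq_nonneg (v - (cc - a))]
    · have hd : δ1 = v := he
      rw [hd]
  exact ⟨key, min_eq_left key⟩
end

section
/- Let c be nonincreasing and let x ∈ ℝ^n satisfy 0 ≤ x ≤ u componentwise. Let k be such that U_k ≤ Σ_i x_i < U_{k+1}, and define x' by x'_i = u_i for i ≤ k, x'_{k+1} = Σ_i x_i − U_k, and x'_i = 0 for i ≥ k+2. Then x' is feasible (0 ≤ x' ≤ u), Σ_i x'_i = Σ_i x_i, and c^T x' ≥ c^T x; consequently f(x') ≤ f(x). -/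
open Finset

theorem stmt10 (n : ℕ) (hn : 0 < n) (u c : ℕ → ℝ)
    (hu : ∀ i, 1 ≤ i → i ≤ n → 0 < u i)
    (hc : ∀ i j, 1 ≤ i → i ≤ j → j ≤ n → c j ≤ c i)
    (x : ℕ → ℝ) (hx : ∀ i, 1 ≤ i → i ≤ n → 0 ≤ x i ∧ x i ≤ u i)
    (k : ℕ) (hk : k < n)
    (hUk : Usum u k ≤ ∑ i ∈ Finset.Icc 1 n, x i)
    (hUk1 : (∑ i ∈ Finset.Icc 1 n, x i) < Usum u (k+1)) :
    let x' : ℕ → ℝ := fun i =>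
      if i ≤ k then u i
      else if i = k + 1 then (∑ j ∈ Finset.Icc 1 n, x j) - Usum u k
      else 0
    (∀ i, 1 ≤ i → i ≤ n → 0 ≤ x' i ∧ x' i ≤ u i) ∧
    (∑ i ∈ Finset.Icc 1 n, x' i) = (∑ i ∈ Finset.Icc 1 n, x i) ∧
    (∑ i ∈ Finset.Icc 1 n, c i * x i) ≤ (∑ i ∈ Finset.Icc 1 n, c i * x' i) ∧
    fobj n c x' ≤ fobj n c x := by
  intro x'
  have hk1n : k + 1 ≤ n := hk
  have hUstep : Usum u (k+1) = Usum u k + u (k+1) := by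
    unfold Usum
    rw [Finset.sum_Icc_succ_top (Nat.le_add_left 1 k)]
  have hIcc : ∀ m : ℕ, Finset.Icc 1 m = Finset.Ioc 0 m := by
    intro m; ext i; simp [Nat.lt_iff_add_one_le]
  -- feasibility
  have hfeas : ∀ i, 1 ≤ i → i ≤ n → 0 ≤ x' i ∧ x' i ≤ u i := by
    intro i h1 h2
    by_cases hik : i ≤ k
    · simp only [x', if_pos hik]
      exact ⟨(hu i h1 h2).le, le_refl _⟩
    · by_cases hik1 : i = k + 1
      · simp only [x', if_neg hik, if_pos hik1]
        subst hik1
        constructor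
        · linarith
        · linarith
      · simp only [x', if_neg hik, if_neg hik1]
        exact ⟨le_refl _, (hu i h1 h2).le⟩
  -- sum equality
  have hsum : (∑ i ∈ Finset.Icc 1 n, x' i) = (∑ i ∈ Finset.Icc 1 n, x i) := by
    have split1 : (∑ i ∈ Finset.Ioc 0 k, x' i) + (∑ i ∈ Finset.Ioc k n, x' i)
        = ∑ i ∈ Finset.Ioc 0 n, x' i :=
      Finset.sum_Ioc_consecutive x' (Nat.zero_le k) (le_of_lt hk)
    have split2 : (∑ i ∈ Finset.Ioc k (k+1), x' i) + (∑ i ∈ Finset.Ioc (k+1) n, x' i)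
        = ∑ i ∈ Finset.Ioc k n, x' i :=
      Finset.sum_Ioc_consecutive x' (Nat.le_succ k) hk1n
    have e1 : (∑ i ∈ Finset.Ioc 0 k, x' i) = Usum u k := by
      unfold Usum
      rw [hIcc k]
      apply Finset.sum_congr rfl
      intro i hi
      rw [Finset.mem_Ioc] at hi
      simp only [x', if_pos hi.2]
    have e2 : (∑ i ∈ Finset.Ioc k (k+1), x' i) = (∑ j ∈ Finset.Icc 1 n, x j) - Usum u k := by
      have : Finset.Ioc k (k+1) = {k+1} := by
        ext i; simp only [Finset.mem_Ioc, Finset.mem_singleton]; omega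
      rw [this, Finset.sum_singleton]
      simp [x']
    have e3 : (∑ i ∈ Finset.Ioc (k+1) n, x' i) = 0 := by
      apply Finset.sum_eq_zero
      intro i hi
      rw [Finset.mem_Ioc] at hi
      simp only [x']
      rw [if_neg (by omega), if_neg (by omega)]
    rw [hIcc n, ← split1, ← split2, e1, e2, e3, ← hIcc n]
    ring
  -- linear term
  have hlin : (∑ i ∈ Finset.Icc 1 n, c i * x i) ≤ ∑ i ∈ Finset.Icc 1 n, c i * x' i := by
    have hpt : ∀ i ∈ Finset.Icc 1 n, c (k+1) * (x' i - x i) ≤ c i * (x' i - x i) := by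
      intro i hi
      rw [Finset.mem_Icc] at hi
      obtain ⟨h1, h2⟩ := hi
      rcases lt_trichotomy i (k+1) with h | h | h
      · have hik : i ≤ k := Nat.lt_succ_iff.mp h
        have hd : 0 ≤ x' i - x i := by
          have := (hx i h1 h2).2
          simp only [x', if_pos hik]; linarith
        exact mul_le_mul_of_nonneg_right (hc i (k+1) h1 h.le hk1n) hd
      · rw [h]
      · have hd : x' i - x i ≤ 0 := by
          have := (hx i h1 h2).1
          simp only [x']
          rw [if_neg (by omega), if_neg (by omega)]
          linarith
        exact mul_le_mul_of_nonpos_right (hc (k+1) i (by omega) h.le h2) hd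
    have h1 := Finset.sum_le_sum hpt
    have h2 : ∑ i ∈ Finset.Icc 1 n, c (k+1) * (x' i - x i) = 0 := by
      rw [← Finset.mul_sum, Finset.sum_sub_distrib, hsum]
      ring
    have h3 : ∑ i ∈ Finset.Icc 1 n, c i * (x' i - x i)
        = (∑ i ∈ Finset.Icc 1 n, c i * x' i) - ∑ i ∈ Finset.Icc 1 n, c i * x i := by
      rw [← Finset.sum_sub_distrib]
      apply Finset.sum_congr rfl
      intro i _; ring
    rw [h2, h3] at h1
    linarith
  refine ⟨hfeas, hsum, hlin, ?_⟩
  unfold fobj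
  rw [hsum]
  linarith
end

section
/- With c nonincreasing, nonnegative, u positive, if G_k < 0 for all k = 1,...,n, then the minimum of f over the box {x : 0 ≤ x ≤ u} is attained at x̃ = x^{(n−1)} + δ' e_n where δ' = min{c_n − U_{n−1}, u_n}. -/
open Finset

theorem stmt12 (n : ℕ) (hn : 0 < n) (u c : ℕ → ℝ)
    (hu : ∀ i, 1 ≤ i → i ≤ n → 0 < u i)
    (hc : ∀ i j, 1 ≤ i → i ≤ j → j ≤ n → c j ≤ c i)
    (hc0 : 0 ≤ c n)
    (hG : ∀ k, 1 ≤ k → k ≤ n → Gseq u c k < 0) :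
    let δ' : ℝ := min (c n - Usum u (n-1)) (u n)
    let xtil : ℕ → ℝ := fun i => xk u (n-1) i + if i = n then δ' else 0
    (∀ i, 1 ≤ i → i ≤ n → 0 ≤ xtil i ∧ xtil i ≤ u i) ∧
    ∀ x : ℕ → ℝ, (∀ i, 1 ≤ i → i ≤ n → 0 ≤ x i ∧ x i ≤ u i) →
      fobj n c xtil ≤ fobj n c x := by
  intro δ' xtil
  have hn1 : n - 1 + 1 = n := Nat.succ_pred_eq_of_pos hn
  have hun := hu n hn le_rfl
  have hGn : Usum u (n-1) + u n / 2 - c n < 0 := hG n hn le_rfl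
  have hδpos : 0 < δ' := by
    have h1 : 0 < c n - Usum u (n-1) := by linarith
    exact lt_min h1 hun
  have hδu : δ' ≤ u n := min_le_right _ _
  have hδc : Usum u (n-1) + δ' ≤ c n := by
    have := min_le_left (c n - Usum u (n-1)) (u n)
    simp only [δ'] at *
    linarith
  have hxt_lt : ∀ i, i ≤ n - 1 → xtil i = u i := by
    intro i hi
    have hiln : i ≠ n := by omega
    simp [xtil, xk, hi, hiln]
  have hxt_n : xtil n = δ' := by
    have h : ¬ n ≤ n - 1 := by omega
    simp [xtil, xk, h]
  constructor
  · intro i h1 h2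
    rcases eq_or_lt_of_le h2 with rfl | hlt
    · rw [hxt_n]; exact ⟨hδpos.le, hδu⟩
    · rw [hxt_lt i (by omega)]
      exact ⟨(hu i h1 h2).le, le_rfl⟩
  · intro x hx
    have hsplit : ∀ g : ℕ → ℝ, ∑ i ∈ Finset.Icc 1 n, g i
        = ∑ i ∈ Finset.Icc 1 (n-1), g i + g n := by
      intro g
      conv_lhs => rw [← hn1]
      rw [Finset.sum_Icc_succ_top (by omega), hn1]
    have hsx : ∑ i ∈ Finset.Icc 1 (n-1), xtil i = Usum u (n-1) := by
      unfold Usum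
      apply Finset.sum_congr rfl
      intro i hi
      rw [Finset.mem_Icc] at hi
      exact hxt_lt i hi.2
    set S := ∑ i ∈ Finset.Icc 1 n, x i with hS
    set st := Usum u (n-1) + δ' with hst
    have hsum_xtil : ∑ i ∈ Finset.Icc 1 n, xtil i = st := by
      rw [hsplit xtil, hsx, hxt_n]
    have hterm : ∀ i ∈ Finset.Icc 1 n, 0 ≤ (st - c i) * (x i - xtil i) := by
      intro i hi
      rw [Finset.mem_Icc] at hi
      rcases eq_or_lt_of_le hi.2 with heq | hlt
      · rw [heq, hxt_n]
        rcases le_or_gt (c n - Usum u (n-1)) (u n) with h | h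
        · have hδ : δ' = c n - Usum u (n-1) := min_eq_left h
          have hstc : st = c n := by rw [hst, hδ]; ring
          rw [hstc]; simp
        · have hδ : δ' = u n := min_eq_right h.le
          have h1 : st - c n ≤ 0 := by linarith
          have h2 : x n - δ' ≤ 0 := by
            rw [hδ]; linarith [(hx n hn le_rfl).2]
          nlinarith
      · have hci : c n ≤ c i := hc i n hi.1 hlt.le le_rfl
        have h1 : st - c i ≤ 0 := by linarith
        have h2 : x i - xtil i ≤ 0 := by
          rw [hxt_lt i (by omega)]
          linarith [(hx i hi.1 hi.2).2]
        nlinarith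
    have hsum_nonneg : 0 ≤ ∑ i ∈ Finset.Icc 1 n, (st - c i) * (x i - xtil i) :=
      Finset.sum_nonneg hterm
    have hexp : ∑ i ∈ Finset.Icc 1 n, (st - c i) * (x i - xtil i)
        = st * S - st * st - ∑ i ∈ Finset.Icc 1 n, c i * x i
          + ∑ i ∈ Finset.Icc 1 n, c i * xtil i := by
      have hring : ∀ i, (st - c i) * (x i - xtil i)
          = st * x i - st * xtil i - c i * x i + c i * xtil i := by
        intro i; ring
      simp_rw [hring]
      rw [Finset.sum_add_distrib, Finset.sum_sub_distrib, Finset.sum_sub_distrib,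
        ← Finset.mul_sum, ← Finset.mul_sum, hsum_xtil, ← hS]
    have hsq : 0 ≤ (S - st)^2 := sq_nonneg _
    unfold fobj
    rw [hsum_xtil, ← hS]
    nlinarith [hexp ▸ hsum_nonneg, hsq]
end

section
/- With c nonincreasing, nonnegative, u positive, if n̄ = 1 (i.e., G_1 ≥ 0), then the minimum of f over {x : 0 ≤ x ≤ u} is attained at x̃ = δ e_1 with δ = min{c_1, u_1}. -/
open Finset

theorem stmt13 (n : ℕ) (hn : 0 < n) (u c : ℕ → ℝ)
    (hu : ∀ i, 1 ≤ i → i ≤ n → 0 < u i)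
    (hc : ∀ i j, 1 ≤ i → i ≤ j → j ≤ n → c j ≤ c i)
    (hc0 : 0 ≤ c n)
    (hG1 : 0 ≤ Gseq u c 1) :
    let δ : ℝ := min (c 1) (u 1)
    let xtil : ℕ → ℝ := fun i => if i = 1 then δ else 0
    (∀ i, 1 ≤ i → i ≤ n → 0 ≤ xtil i ∧ xtil i ≤ u i) ∧
    ∀ x : ℕ → ℝ, (∀ i, 1 ≤ i → i ≤ n → 0 ≤ x i ∧ x i ≤ u i) →
      fobj n c xtil ≤ fobj n c x := by
  intro δ xtil
  have hu1 : 0 < u 1 := hu 1 le_rfl hn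
  have hG : c 1 ≤ u 1 / 2 := by
    have h : Gseq u c 1 = u 1 / 2 - c 1 := by simp [Gseq, Usum]
    rw [h] at hG1; linarith
  have hc1 : 0 ≤ c 1 := le_trans hc0 (hc 1 n le_rfl hn le_rfl)
  have hδ : δ = c 1 := min_eq_left (by linarith)
  have h1mem : (1 : ℕ) ∈ Finset.Icc 1 n := Finset.mem_Icc.mpr ⟨le_rfl, hn⟩
  constructor
  · intro i h1 hin
    by_cases hi : i = 1
    · subst hi
      simp only [xtil, if_pos rfl, hδ]
      exact ⟨hc1, by linarith⟩
    · simp only [xtil, if_neg hi]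
      exact ⟨le_rfl, (hu i h1 hin).le⟩
  · intro x hx
    have hsum1 : ∑ i ∈ Finset.Icc 1 n, xtil i = δ := by
      simp only [xtil]
      rw [Finset.sum_ite_eq' (Finset.Icc 1 n) 1 (fun _ => δ), if_pos h1mem]
    have hsum2 : ∑ i ∈ Finset.Icc 1 n, c i * xtil i = c 1 * δ := by
      simp only [xtil, mul_ite, mul_zero]
      rw [Finset.sum_ite_eq' (Finset.Icc 1 n) 1 (fun i => c i * δ), if_pos h1mem]
    set S : ℝ := ∑ i ∈ Finset.Icc 1 n, x i with hS
    have hkey : ∑ i ∈ Finset.Icc 1 n, c i * x i ≤ c 1 * S := by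
      rw [hS, Finset.mul_sum]
      apply Finset.sum_le_sum
      intro i hi
      rw [Finset.mem_Icc] at hi
      exact mul_le_mul_of_nonneg_right (hc 1 i le_rfl hi.1 hi.2) (hx i hi.1 hi.2).1
    have : fobj n c xtil = (1/2) * δ^2 - c 1 * δ := by
      rw [fobj, hsum1, hsum2]
    rw [this, hδ, fobj]
    nlinarith [sq_nonneg (S - c 1)]
end

section
/- The problem min{ (1/2)(1^T x)^2 − c^T x : 0 ≤ x ≤ u } with u > 0 always has an optimal solution x* such that at most one coordinate i satisfies 0 < x*_i < u_i. -/
open Finset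

open scoped Classical in
lemma exists_min (n : ℕ) (u c : ℕ → ℝ) (hu : ∀ i, 1 ≤ i → i ≤ n → 0 < u i) :
    ∃ x : ℕ → ℝ, (∀ i, 1 ≤ i → i ≤ n → 0 ≤ x i ∧ x i ≤ u i) ∧
      ∀ y, (∀ i, 1 ≤ i → i ≤ n → 0 ≤ y i ∧ y i ≤ u i) → fobj n c x ≤ fobj n c y := by
  classical
  let T : ℕ → Set ℝ := fun i => if 1 ≤ i ∧ i ≤ n then Set.Icc 0 (u i) else ({0} : Set ℝ)
  have hTdef : ∀ i, T i = if 1 ≤ i ∧ i ≤ n then Set.Icc 0 (u i) else ({0} : Set ℝ) :=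
    fun i => rfl
  have hK : IsCompact (Set.univ.pi T) := by
    apply isCompact_univ_pi
    intro i
    rw [hTdef]
    by_cases h : 1 ≤ i ∧ i ≤ n
    · rw [if_pos h]; exact isCompact_Icc
    · rw [if_neg h]; exact isCompact_singleton
  have hne : (Set.univ.pi T).Nonempty := by
    refine ⟨fun _ => 0, fun i _ => ?_⟩
    rw [hTdef]
    by_cases h : 1 ≤ i ∧ i ≤ n
    · rw [if_pos h]; exact ⟨le_refl 0, (hu i h.1 h.2).le⟩
    · rw [if_neg h]; rfl
  have hcont : Continuous (fobj n c) := by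
    unfold fobj
    apply Continuous.sub
    · exact (continuous_const.mul ((continuous_finset_sum _ fun i _ => continuous_apply i).pow 2))
    · exact continuous_finset_sum _ fun i _ => continuous_const.mul (continuous_apply i)
  obtain ⟨x, hxK, hxmin⟩ := hK.exists_isMinOn hne hcont.continuousOn
  refine ⟨x, ?_, ?_⟩
  · intro i h1 h2
    have h := hxK i (Set.mem_univ i)
    rw [hTdef, if_pos ⟨h1, h2⟩] at h
    exact h
  · intro y hy
    set y' : ℕ → ℝ := fun i => if 1 ≤ i ∧ i ≤ n then y i else 0 with hy'
    have hmem : y' ∈ Set.univ.pi T := by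
      intro i _
      rw [hTdef]
      by_cases h : 1 ≤ i ∧ i ≤ n
      · rw [if_pos h]
        show (if 1 ≤ i ∧ i ≤ n then y i else 0) ∈ Set.Icc 0 (u i)
        rw [if_pos h]
        exact ⟨(hy i h.1 h.2).1, (hy i h.1 h.2).2⟩
      · rw [if_neg h]
        show (if 1 ≤ i ∧ i ≤ n then y i else 0) ∈ ({0} : Set ℝ)
        rw [if_neg h]; rfl
    have hle : fobj n c x ≤ fobj n c y' := hxmin hmem
    have heq : fobj n c y' = fobj n c y := by
      unfold fobj
      congr 1
      · congr 2
        refine Finset.sum_congr rfl fun i hi => ?_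
        rw [Finset.mem_Icc] at hi
        simp [hy', hi.1, hi.2]
      · refine Finset.sum_congr rfl fun i hi => ?_
        rw [Finset.mem_Icc] at hi
        simp [hy', hi.1, hi.2]
    rwa [heq] at hle

lemma sum_update2 (s : Finset ℕ) (x : ℕ → ℝ) (i j : ℕ) (a b : ℝ)
    (hi : i ∈ s) (hj : j ∈ s) (hij : i ≠ j) (g : ℕ → ℝ → ℝ) :
    ∑ l ∈ s, g l (Function.update (Function.update x i a) j b l)
      = ∑ l ∈ s, g l (x l) - g i (x i) - g j (x j) + g i a + g j b := by
  classical
  have hi' : i ∈ s.erase j := Finset.mem_erase.mpr ⟨hij, hi⟩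
  rw [← Finset.add_sum_erase s _ hj, ← Finset.add_sum_erase (s.erase j) _ hi',
      ← Finset.add_sum_erase s (fun l => g l (x l)) hj,
      ← Finset.add_sum_erase (s.erase j) (fun l => g l (x l)) hi']
  have hj' : Function.update (Function.update x i a) j b j = b := Function.update_self _ _ _
  have hi'' : Function.update (Function.update x i a) j b i = a := by
    rw [Function.update_of_ne hij, Function.update_self]
  have hrest : ∑ l ∈ (s.erase j).erase i, g l (Function.update (Function.update x i a) j b l)
      = ∑ l ∈ (s.erase j).erase i, g l (x l) := by
    refine Finset.sum_congr rfl fun l hl => ?_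
    rw [Finset.mem_erase] at hl
    have hlj := (Finset.mem_erase.mp hl.2).1
    rw [Function.update_of_ne hlj, Function.update_of_ne hl.1]
  rw [hj', hi'', hrest]
  ring

lemma fobj_move (n : ℕ) (c x : ℕ → ℝ) (i j : ℕ) (t : ℝ)
    (hi : i ∈ Finset.Icc 1 n) (hj : j ∈ Finset.Icc 1 n) (hij : i ≠ j) :
    fobj n c (Function.update (Function.update x i (x i + t)) j (x j - t))
      = fobj n c x - t * (c i - c j) := by
  unfold fobj
  rw [sum_update2 _ x i j _ _ hi hj hij (fun _ v => v),
      sum_update2 _ x i j _ _ hi hj hij (fun l v => c l * v)]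
  ring

open scoped Classical in
lemma descent (n : ℕ) (u c : ℕ → ℝ) (x : ℕ → ℝ)
    (hx : ∀ i, 1 ≤ i → i ≤ n → 0 ≤ x i ∧ x i ≤ u i)
    (hmin : ∀ y, (∀ i, 1 ≤ i → i ≤ n → 0 ≤ y i ∧ y i ≤ u i) → fobj n c x ≤ fobj n c y)
    (h2 : 1 < ((Finset.Icc 1 n).filter (fun i => 0 < x i ∧ x i < u i)).card) :
    ∃ y : ℕ → ℝ, (∀ i, 1 ≤ i → i ≤ n → 0 ≤ y i ∧ y i ≤ u i) ∧
      (∀ z, (∀ i, 1 ≤ i → i ≤ n → 0 ≤ z i ∧ z i ≤ u i) → fobj n c y ≤ fobj n c z) ∧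
      ((Finset.Icc 1 n).filter (fun i => 0 < y i ∧ y i < u i)).card
        < ((Finset.Icc 1 n).filter (fun i => 0 < x i ∧ x i < u i)).card := by
  classical
  obtain ⟨i, hi, j, hj, hij⟩ := Finset.one_lt_card.mp h2
  rw [Finset.mem_filter] at hi hj
  obtain ⟨hiI, hxi0, hxiu⟩ := hi
  obtain ⟨hjI, hxj0, hxju⟩ := hj
  set move : ℝ → ℕ → ℝ :=
    fun t => Function.update (Function.update x i (x i + t)) j (x j - t) with hmove
  have hmi : ∀ t, move t i = x i + t := by
    intro t; rw [hmove]
    show Function.update (Function.update x i (x i + t)) j (x j - t) i = _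
    rw [Function.update_of_ne hij, Function.update_self]
  have hmj : ∀ t, move t j = x j - t := by
    intro t; rw [hmove]; exact Function.update_self _ _ _
  have hml : ∀ t l, l ≠ i → l ≠ j → move t l = x l := by
    intro t l hli hlj; rw [hmove]
    show Function.update (Function.update x i (x i + t)) j (x j - t) l = _
    rw [Function.update_of_ne hlj, Function.update_of_ne hli]
  have hiI' := Finset.mem_Icc.mp hiI
  have hjI' := Finset.mem_Icc.mp hjI
  have feas_move : ∀ t, 0 ≤ x i + t → x i + t ≤ u i → 0 ≤ x j - t → x j - t ≤ u j →
      (∀ l, 1 ≤ l → l ≤ n → 0 ≤ move t l ∧ move t l ≤ u l) := by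
    intro t h1 h2 h3 h4 l hl1 hl2
    by_cases hli : l = i
    · subst hli; rw [hmi]; exact ⟨h1, h2⟩
    · by_cases hlj : l = j
      · subst hlj; rw [hmj]; exact ⟨h3, h4⟩
      · rw [hml t l hli hlj]; exact hx l hl1 hl2
  have key : ∀ t, 0 ≤ x i + t → x i + t ≤ u i → 0 ≤ x j - t → x j - t ≤ u j →
      t * (c i - c j) ≤ 0 := by
    intro t h1 h2 h3 h4
    have := hmin (move t) (feas_move t h1 h2 h3 h4)
    rw [hmove, fobj_move n c x i j t hiI hjI hij] at this
    linarith
  set ε := min (u i - x i) (x j) with hε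
  have hε0 : 0 < ε := lt_min (by linarith) hxj0
  have hεle1 : ε ≤ u i - x i := min_le_left _ _
  have hεle2 : ε ≤ x j := min_le_right _ _
  have hcij : c i ≤ c j := by
    have := key ε (by linarith) (by linarith) (by linarith)
      (by linarith [(hx j hjI'.1 hjI'.2).2])
    nlinarith
  have hcji : c j ≤ c i := by
    set δ := min (x i) (u j - x j) with hδ
    have hδ0 : 0 < δ := lt_min hxi0 (by linarith)
    have hδ1 : δ ≤ x i := min_le_left _ _
    have hδ2 : δ ≤ u j - x j := min_le_right _ _
    have := key (-δ) (by linarith) (by linarith [(hx i hiI'.1 hiI'.2).2]) (by linarith)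
      (by linarith)
    nlinarith
  have hceq : c i = c j := le_antisymm hcij hcji
  refine ⟨move ε, feas_move ε (by linarith) (by linarith) (by linarith)
    (by linarith [(hx j hjI'.1 hjI'.2).2]), ?_, ?_⟩
  · intro z hz
    have heq : fobj n c (move ε) = fobj n c x := by
      rw [hmove, fobj_move n c x i j ε hiI hjI hij, hceq]; ring
    rw [heq]; exact hmin z hz
  · apply Finset.card_lt_card
    have hsub : (Finset.Icc 1 n).filter (fun l => 0 < move ε l ∧ move ε l < u l)
        ⊆ (Finset.Icc 1 n).filter (fun l => 0 < x l ∧ x l < u l) := by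
      intro l hl
      rw [Finset.mem_filter] at hl ⊢
      refine ⟨hl.1, ?_⟩
      by_cases hli : l = i
      · subst hli; exact ⟨hxi0, hxiu⟩
      · by_cases hlj : l = j
        · subst hlj; exact ⟨hxj0, hxju⟩
        · rw [hml ε l hli hlj] at hl; exact hl.2
    refine (Finset.ssubset_iff_of_subset hsub).mpr ?_
    rcases le_total (u i - x i) (x j) with hc | hc
    · refine ⟨i, Finset.mem_filter.mpr ⟨hiI, hxi0, hxiu⟩, ?_⟩
      intro hcon
      rw [Finset.mem_filter] at hcon
      have : move ε i = u i := by rw [hmi, hε, min_eq_left hc]; ring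
      rw [this] at hcon
      exact lt_irrefl _ hcon.2.2
    · refine ⟨j, Finset.mem_filter.mpr ⟨hjI, hxj0, hxju⟩, ?_⟩
      intro hcon
      rw [Finset.mem_filter] at hcon
      have : move ε j = 0 := by rw [hmj, hε, min_eq_right hc]; ring
      rw [this] at hcon
      exact lt_irrefl _ hcon.2.1

open scoped Classical in
theorem stmt14 (n : ℕ) (hn : 0 < n) (u c : ℕ → ℝ)
    (hu : ∀ i, 1 ≤ i → i ≤ n → 0 < u i) :
    ∃ xstar : ℕ → ℝ,
      (∀ i, 1 ≤ i → i ≤ n → 0 ≤ xstar i ∧ xstar i ≤ u i) ∧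
      (∀ x : ℕ → ℝ, (∀ i, 1 ≤ i → i ≤ n → 0 ≤ x i ∧ x i ≤ u i) →
        fobj n c xstar ≤ fobj n c x) ∧
      ((Finset.Icc 1 n).filter (fun i => 0 < xstar i ∧ xstar i < u i)).card ≤ 1 := by
  classical
  have main : ∀ m : ℕ, ∀ x : ℕ → ℝ,
      (∀ i, 1 ≤ i → i ≤ n → 0 ≤ x i ∧ x i ≤ u i) →
      (∀ y, (∀ i, 1 ≤ i → i ≤ n → 0 ≤ y i ∧ y i ≤ u i) → fobj n c x ≤ fobj n c y) →
      ((Finset.Icc 1 n).filter (fun i => 0 < x i ∧ x i < u i)).card ≤ m →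
      ∃ xstar : ℕ → ℝ,
        (∀ i, 1 ≤ i → i ≤ n → 0 ≤ xstar i ∧ xstar i ≤ u i) ∧
        (∀ x : ℕ → ℝ, (∀ i, 1 ≤ i → i ≤ n → 0 ≤ x i ∧ x i ≤ u i) →
          fobj n c xstar ≤ fobj n c x) ∧
        ((Finset.Icc 1 n).filter (fun i => 0 < xstar i ∧ xstar i < u i)).card ≤ 1 := by
    intro m
    induction m with
    | zero =>
      intro x hx hmin hcard
      exact ⟨x, hx, hmin, hcard.trans (by norm_num)⟩
    | succ m ih =>
      intro x hx hmin hcard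
      by_cases h1 : ((Finset.Icc 1 n).filter (fun i => 0 < x i ∧ x i < u i)).card ≤ 1
      · exact ⟨x, hx, hmin, h1⟩
      · push_neg at h1
        obtain ⟨y, hy, hymin, hylt⟩ := descent n u c x hx hmin h1
        exact ih y hy hymin (by omega)
  obtain ⟨x, hx, hmin⟩ := exists_min n u c hu
  exact main ((Finset.Icc 1 n).filter (fun i => 0 < x i ∧ x i < u i)).card x hx hmin le_rfl
end

section
/- Let x' be a 'consecutive fill' vector with index k (x'_i = u_i for i ≤ k, 0 ≤ x'_{k+1} < u_{k+1}, x'_i = 0 for i > k+1), with c nonincreasing, nonnegative, u positive. If k < n̄ − 2 where n̄ is the least index with G_{n̄} ≥ 0, then f(x^{(k+1)}) < f(x'). -/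
open Finset

theorem stmt16 (n : ℕ) (hn : 0 < n) (u c : ℕ → ℝ)
    (hu : ∀ i, 1 ≤ i → i ≤ n → 0 < u i)
    (hc : ∀ i j, 1 ≤ i → i ≤ j → j ≤ n → c j ≤ c i)
    (hc0 : 0 ≤ c n)
    (nb : ℕ) (hnb1 : 1 ≤ nb) (hnbn : nb ≤ n)
    (hGnb : 0 ≤ Gseq u c nb)
    (hleast : ∀ k, 1 ≤ k → k < nb → Gseq u c k < 0)
    (k : ℕ) (hknb : k + 2 < nb)
    (x' : ℕ → ℝ)
    (h1 : ∀ i, 1 ≤ i → i ≤ k → x' i = u i)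
    (h2 : 0 ≤ x' (k+1) ∧ x' (k+1) < u (k+1))
    (h3 : ∀ i, k + 1 < i → i ≤ n → x' i = 0) :
    fobj n c (xk u (k+1)) < fobj n c x' := by
  have hk2n : k + 2 ≤ n := by omega
  set t := x' (k+1) with ht
  set S := Usum u k with hS
  set u1 := u (k+1) with hu1
  -- sums for xk
  have hsub : Finset.Icc 1 (k+1) ⊆ Finset.Icc 1 n := Finset.Icc_subset_Icc_right (by omega)
  have hxg : ∀ g : ℕ → ℝ, ∑ i ∈ Finset.Icc 1 n, g i * xk u (k+1) i
      = ∑ i ∈ Finset.Icc 1 (k+1), g i * u i := by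
    intro g
    rw [← Finset.sum_subset hsub]
    · refine Finset.sum_congr rfl fun i hi => ?_
      simp only [Finset.mem_Icc] at hi
      simp [xk, hi.2]
    · intro i hi hni
      simp only [Finset.mem_Icc] at hi hni
      have : ¬ i ≤ k+1 := by omega
      simp [xk, this]
  have hxg' : ∀ g : ℕ → ℝ, ∑ i ∈ Finset.Icc 1 n, g i * x' i
      = (∑ i ∈ Finset.Icc 1 k, g i * u i) + g (k+1) * t := by
    intro g
    rw [← Finset.sum_subset hsub]
    · rw [Finset.sum_Icc_succ_top (by omega)]
      congr 1
      refine Finset.sum_congr rfl fun i hi => ?_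
      simp only [Finset.mem_Icc] at hi
      rw [h1 i hi.1 hi.2]
    · intro i hi hni
      simp only [Finset.mem_Icc] at hi hni
      rw [h3 i (by omega) hi.2, mul_zero]
  have hsum_xk : ∑ i ∈ Finset.Icc 1 n, xk u (k+1) i = S + u1 := by
    have := hxg (fun _ => 1)
    simp only [one_mul] at this
    rw [this, Finset.sum_Icc_succ_top (by omega : 1 ≤ k+1)]; rfl
  have hsum_x' : ∑ i ∈ Finset.Icc 1 n, x' i = S + t := by
    have := hxg' (fun _ => 1)
    simp only [one_mul] at this
    rw [this]; rfl
  have hcsum_xk : ∑ i ∈ Finset.Icc 1 n, c i * xk u (k+1) i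
      = (∑ i ∈ Finset.Icc 1 k, c i * u i) + c (k+1) * u1 := by
    rw [hxg c, Finset.sum_Icc_succ_top (by omega : 1 ≤ k+1)]
  have hcsum_x' : ∑ i ∈ Finset.Icc 1 n, c i * x' i
      = (∑ i ∈ Finset.Icc 1 k, c i * u i) + c (k+1) * t := hxg' c
  -- key inequality
  have hG2 : Gseq u c (k+2) < 0 := hleast (k+2) (by omega) hknb
  have hUs : Usum u (k+1) = S + u1 := by
    rw [Usum, Finset.sum_Icc_succ_top (by omega : 1 ≤ k+1)]; rfl
  have hGeq : Gseq u c (k+2) = S + u1 + u (k+2) / 2 - c (k+2) := by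
    show Usum u (k+2-1) + u (k+2) / 2 - c (k+2) = _
    norm_num [hUs]
  have hu2 : 0 < u (k+2) := hu (k+2) (by omega) hk2n
  have hcm : c (k+2) ≤ c (k+1) := hc (k+1) (k+2) (by omega) (by omega) hk2n
  have hkey : S + u1 - c (k+1) < 0 := by
    rw [hGeq] at hG2; linarith
  have htu : t < u1 := h2.2
  have ht0 : 0 ≤ t := h2.1
  rw [fobj, fobj, hsum_xk, hsum_x', hcsum_xk, hcsum_x']
  nlinarith [mul_pos (sub_pos.mpr htu) (by linarith : 0 < c (k+1) - S - u1), sq_nonneg (u1 - t)]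
end

section
/- If c is nonincreasing, nonnegative, u positive, and c_{n̄} ≤ U_{n̄−1} ≤ c_{n̄−1} where n̄ > 1 is the least index with G_{n̄} ≥ 0, then x^{(n̄−1)} is a global minimizer of f over the box [0, u]; in particular, if all entries of u are integers, the minimizer is integral. -/
open Finset

theorem stmt17 (n : ℕ) (hn : 0 < n) (u c : ℕ → ℝ)
    (hu : ∀ i, 1 ≤ i → i ≤ n → 0 < u i)
    (hc : ∀ i j, 1 ≤ i → i ≤ j → j ≤ n → c j ≤ c i)
    (hc0 : 0 ≤ c n)
    (nb : ℕ) (hnb1 : 1 < nb) (hnbn : nb ≤ n)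
    (hGnb : 0 ≤ Gseq u c nb)
    (hleast : ∀ k, 1 ≤ k → k < nb → Gseq u c k < 0)
    (hlo : c nb ≤ Usum u (nb-1)) (hhi : Usum u (nb-1) ≤ c (nb-1)) :
    ((∀ x : ℕ → ℝ, (∀ i, 1 ≤ i → i ≤ n → 0 ≤ x i ∧ x i ≤ u i) →
        fobj n c (xk u (nb-1)) ≤ fobj n c x) ∧
      ((∀ i, 1 ≤ i → i ≤ n → ∃ m : ℤ, u i = (m : ℝ)) →
        ∀ i, 1 ≤ i → i ≤ n → ∃ m : ℤ, xk u (nb-1) i = (m : ℝ))) := by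
  constructor
  · intro x hx
    set m := nb - 1 with hm
    have hm1 : 1 ≤ m := by omega
    have hmn : m ≤ n := by omega
    have hsplit : ∀ g : ℕ → ℝ, ∑ i ∈ Finset.Icc 1 n, g i
        = (∑ i ∈ Finset.Icc 1 m, g i) + ∑ i ∈ Finset.Ioc m n, g i := by
      intro g
      rw [show (1:ℕ) = 0 + 1 from rfl, Finset.Icc_add_one_left_eq_Ioc, Finset.Icc_add_one_left_eq_Ioc,
        Finset.sum_Ioc_consecutive g (Nat.zero_le m) hmn]
    set S : ℝ := Usum u m with hS
    -- sums for x*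
    have hxk1 : ∑ i ∈ Finset.Icc 1 m, xk u m i = S := by
      apply Finset.sum_congr rfl
      intro i hi
      simp only [Finset.mem_Icc] at hi
      simp [xk, hi.2]
    have hxk2 : ∑ i ∈ Finset.Ioc m n, xk u m i = 0 := by
      apply Finset.sum_eq_zero
      intro i hi
      simp only [Finset.mem_Ioc] at hi
      simp [xk, Nat.not_le.mpr hi.1]
    have hxkc1 : ∑ i ∈ Finset.Icc 1 m, c i * xk u m i = ∑ i ∈ Finset.Icc 1 m, c i * u i := by
      apply Finset.sum_congr rfl
      intro i hi
      simp only [Finset.mem_Icc] at hi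
      simp [xk, hi.2]
    have hxkc2 : ∑ i ∈ Finset.Ioc m n, c i * xk u m i = 0 := by
      apply Finset.sum_eq_zero
      intro i hi
      simp only [Finset.mem_Ioc] at hi
      simp [xk, Nat.not_le.mpr hi.1]
    -- key bounds
    have hScm : S ≤ c m := hhi
    have hcnbS : c nb ≤ S := hlo
    have h1 : ∑ i ∈ Finset.Ioc m n, c i * x i ≤ S * ∑ i ∈ Finset.Ioc m n, x i := by
      rw [Finset.mul_sum]
      apply Finset.sum_le_sum
      intro i hi
      simp only [Finset.mem_Ioc] at hi
      have hnbi : nb ≤ i := by omega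
      have hci : c i ≤ S := le_trans (hc nb i (by omega) hnbi hi.2) hcnbS
      have hxi : 0 ≤ x i := (hx i (by omega) hi.2).1
      nlinarith
    have h2 : ∑ i ∈ Finset.Icc 1 m, (S * (u i - x i)) ≤
        ∑ i ∈ Finset.Icc 1 m, (c i * u i - c i * x i) := by
      apply Finset.sum_le_sum
      intro i hi
      simp only [Finset.mem_Icc] at hi
      have hci : S ≤ c i := le_trans hScm (hc i m hi.1 hi.2 hmn)
      have hxi : x i ≤ u i := (hx i hi.1 (le_trans hi.2 hmn)).2
      nlinarith
    have h2' : S * (S - ∑ i ∈ Finset.Icc 1 m, x i) ≤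
        (∑ i ∈ Finset.Icc 1 m, c i * u i) - ∑ i ∈ Finset.Icc 1 m, c i * x i := by
      have := h2
      rw [Finset.sum_sub_distrib] at this
      calc S * (S - ∑ i ∈ Finset.Icc 1 m, x i)
          = ∑ i ∈ Finset.Icc 1 m, (S * (u i - x i)) := by
            rw [← Finset.mul_sum, Finset.sum_sub_distrib, hS, Usum]
        _ ≤ _ := this
    simp only [fobj, hsplit (fun i => xk u m i), hsplit (fun i => c i * xk u m i),
      hsplit x, hsplit (fun i => c i * x i), hxk1, hxk2, hxkc1, hxkc2]
    set T1 := ∑ i ∈ Finset.Icc 1 m, x i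
    set T2 := ∑ i ∈ Finset.Ioc m n, x i
    nlinarith [sq_nonneg (T1 + T2 - S)]
  · intro hint i hi1 hin
    by_cases h : i ≤ nb - 1
    · obtain ⟨k, hk⟩ := hint i hi1 hin
      exact ⟨k, by simp [xk, h, hk]⟩
    · exact ⟨0, by simp [xk, h]⟩
end
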